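/- arXiv:math/0403505 — 2 statements merged into one kernel-verified Lean document; each statement's English description precedes it below -/
import Mathlib

section
/- Let A = (G_A, s_A, t_A) be an st-flow graph, and let w be a cut vertex of G_A with w ≠ s_A and w ≠ t_A. Then w is a splitting vertex of A: deleting w from G_A yields exactly two components, with s_A and t_A lying in distinct components. -/
/-- A flow graph: a finite directed multigraph (loops and parallel edges allowed)
with a distinguished source vertex `s` and target vertex `t`.
(Connectedness is stated as a separate predicate `FlowGraph.Connected`.) -/
structure FlowGraph where
  V : Type
  E : Type
  [finV : Finite V]
  [finE : Finite E]
  src : E → V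
  tgt : E → V
  s : V
  t : V

attribute [instance] FlowGraph.finV FlowGraph.finE

namespace FlowGraph

/-- Adjacency in the underlying undirected multigraph, using only edges in `ES`. -/
def adjOn (A : FlowGraph) (ES : Set A.E) (u v : A.V) : Prop :=
  ∃ e ∈ ES, (A.src e = u ∧ A.tgt e = v) ∨ (A.src e = v ∧ A.tgt e = u)

/-- Reachability in the underlying undirected multigraph, using only edges in `ES`. -/
def reachOn (A : FlowGraph) (ES : Set A.E) : A.V → A.V → Prop :=
  Relation.ReflTransGen (A.adjOn ES)

/-- The multigraph underlying a flow graph is connected. -/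
def Connected (A : FlowGraph) : Prop := ∀ u v : A.V, A.reachOn Set.univ u v

/-- Isomorphism of flow graphs: a graph isomorphism mapping source to source
and target to target.  Equality "as flow graphs" means `Iso`. -/
def Iso (A B : FlowGraph) : Prop :=
  ∃ (φV : A.V ≃ B.V) (φE : A.E ≃ B.E),
    (∀ e, B.src (φE e) = φV (A.src e)) ∧
    (∀ e, B.tgt (φE e) = φV (A.tgt e)) ∧
    φV A.s = B.s ∧ φV A.t = B.t

/-- The relation identifying `t_A` with `s_B` in the disjoint union of vertex sets. -/
def addRel (A B : FlowGraph) : (A.V ⊕ B.V) → (A.V ⊕ B.V) → Prop :=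
  fun x y => x = Sum.inl A.t ∧ y = Sum.inr B.s

/-- The sum `A ⊕ B` of flow graphs: disjoint copies of `A` and `B`
with `t_A` identified with `s_B`; source `s_A`, target `t_B`. -/
def add (A B : FlowGraph) : FlowGraph where
  V := Quot (addRel A B)
  E := A.E ⊕ B.E
  src := fun e =>
    Quot.mk _ (Sum.elim (fun a => Sum.inl (A.src a)) (fun b => Sum.inr (B.src b)) e)
  tgt := fun e =>
    Quot.mk _ (Sum.elim (fun a => Sum.inl (A.tgt a)) (fun b => Sum.inr (B.tgt b)) e)
  s := Quot.mk _ (Sum.inl A.s)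
  t := Quot.mk _ (Sum.inr B.t)

/-- The relation gluing, for every edge `e = (u,v)` of `A`, the source of the
`e`-th copy of `B` to `u` and its target to `v`. -/
def mulRel (A B : FlowGraph) : (A.V ⊕ A.E × B.V) → (A.V ⊕ A.E × B.V) → Prop :=
  fun x y => ∃ e : A.E,
    (x = Sum.inr (e, B.s) ∧ y = Sum.inl (A.src e)) ∨
    (x = Sum.inr (e, B.t) ∧ y = Sum.inl (A.tgt e))

/-- The product `A ⊗ B` of flow graphs: every directed edge `e = (u,v)` of `A` is
replaced by a fresh copy of `B`, with `u` identified with the source of the copy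
and `v` with its target; source `s_A`, target `t_A`. -/
def mul (A B : FlowGraph) : FlowGraph where
  V := Quot (mulRel A B)
  E := A.E × B.E
  src := fun p => Quot.mk _ (Sum.inr (p.1, B.src p.2))
  tgt := fun p => Quot.mk _ (Sum.inr (p.1, B.tgt p.2))
  s := Quot.mk _ (Sum.inl A.s)
  t := Quot.mk _ (Sum.inl A.t)

/-- The trivial flow graph `F₀`: one vertex, no edges, source = target. -/
def F0 : FlowGraph where
  V := Unit
  E := Empty
  src := Empty.elim
  tgt := Empty.elim
  s := ()
  t := ()

/-- The flow graph `F₁`: a single directed edge from source to target. -/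
def F1 : FlowGraph where
  V := Bool
  E := Unit
  src := fun _ => false
  tgt := fun _ => true
  s := false
  t := true

/-- The graphical natural number `n`: the directed path with `n+1` vertices and
`n` edges, source its initial vertex and target its final vertex. -/
def pathGraph (n : ℕ) : FlowGraph where
  V := Fin (n + 1)
  E := Fin n
  src := fun e => e.castSucc
  tgt := fun e => e.succ
  s := 0
  t := Fin.last n

/-- A flow graph is infinitesimal if it is nontrivial and its source equals its target. -/
def Infinitesimal (A : FlowGraph) : Prop := ¬ A.Iso F0 ∧ A.s = A.t

/-- `w` is a splitting vertex of `A`: `w ≠ s_A, t_A`, and after deleting `w`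
(i.e. using only edges not incident to `w`), `s_A` and `t_A` lie in distinct
components (hence deletion produces at least two components). -/
def IsSplittingVertex (A : FlowGraph) (w : A.V) : Prop :=
  w ≠ A.s ∧ w ≠ A.t ∧ ¬ A.reachOn {e | A.src e ≠ w ∧ A.tgt e ≠ w} A.s A.t

/-- `e₀` is a splitting edge of `A`: deleting `e₀` leaves exactly two components,
one containing `s_A` and the other containing `t_A`. -/
def IsSplittingEdge (A : FlowGraph) (e₀ : A.E) : Prop :=
  ¬ A.reachOn {e | e ≠ e₀} A.s A.t ∧
  ∀ v : A.V, A.reachOn {e | e ≠ e₀} v A.s ∨ A.reachOn {e | e ≠ e₀} v A.t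

/-- The initial vertex of a directed edge traversed with direction `dir`
(`true` = forwards, `false` = backwards). -/
def stepSrc (A : FlowGraph) (p : A.E × Bool) : A.V := if p.2 then A.src p.1 else A.tgt p.1

/-- The final vertex of a directed edge traversed with direction `dir`. -/
def stepTgt (A : FlowGraph) (p : A.E × Bool) : A.V := if p.2 then A.tgt p.1 else A.src p.1

/-- `l` is a walk from `u` to `v` in the underlying undirected multigraph:
a list of edges each traversed in some direction, consecutively matching. -/
def IsWalk (A : FlowGraph) : A.V → A.V → List (A.E × Bool) → Prop
  | u, v, [] => u = v
  | u, v, p :: l => A.stepSrc p = u ∧ A.IsWalk (A.stepTgt p) v l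

/-- The list of vertices visited by a walk starting at `u`. -/
def walkVertices (A : FlowGraph) (u : A.V) : List (A.E × Bool) → List A.V
  | [] => [u]
  | p :: l => u :: A.walkVertices (A.stepTgt p) l

/-- The edge `e` has the ST property: some non-self-intersecting path from `s_A`
to `t_A` in the underlying undirected multigraph traverses `e`. -/
def HasST (A : FlowGraph) (e : A.E) : Prop :=
  ∃ l : List (A.E × Bool), A.IsWalk A.s A.t l ∧ (A.walkVertices A.s l).Nodup ∧
    ∃ dir : Bool, (e, dir) ∈ l

/-- `A` is an st-flow graph: every edge has the ST property. -/
def IsSTGraph (A : FlowGraph) : Prop := ∀ e : A.E, A.HasST e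

/-- The vertex set of the st-core: `s_A`, `t_A`, and all endpoints of ST edges. -/
def stCoreV (A : FlowGraph) : Set A.V :=
  {v | v = A.s ∨ v = A.t ∨ ∃ e, A.HasST e ∧ (A.src e = v ∨ A.tgt e = v)}

/-- The st-core of `A`: delete all edges without the ST property and keep the
subgraph induced by the remaining edges together with `s_A` and `t_A`. -/
def stCore (A : FlowGraph) : FlowGraph where
  V := {v // v ∈ A.stCoreV}
  E := {e // A.HasST e}
  src := fun e => ⟨A.src e.1, Or.inr (Or.inr ⟨e.1, e.2, Or.inl rfl⟩)⟩
  tgt := fun e => ⟨A.tgt e.1, Or.inr (Or.inr ⟨e.1, e.2, Or.inr rfl⟩)⟩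
  s := ⟨A.s, Or.inl rfl⟩
  t := ⟨A.t, Or.inr (Or.inl rfl)⟩

/-- An embedding of (the multigraph of) `A` into (the multigraph of) `B`:
injective on vertices and on edges, preserving directed incidence. -/
structure Emb (A B : FlowGraph) where
  vmap : A.V → B.V
  emap : A.E → B.E
  vinj : Function.Injective vmap
  einj : Function.Injective emap
  src_map : ∀ e, B.src (emap e) = vmap (A.src e)
  tgt_map : ∀ e, B.tgt (emap e) = vmap (A.tgt e)

/-- `(V₁, E₁)` is a subgraph: all endpoints of edges in `E₁` lie in `V₁`. -/
def IsSubgraph (A : FlowGraph) (VS : Set A.V) (ES : Set A.E) : Prop :=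
  ∀ e ∈ ES, A.src e ∈ VS ∧ A.tgt e ∈ VS

/-- The subgraph `(VS, ES)` is connected. -/
def SubConnected (A : FlowGraph) (VS : Set A.V) (ES : Set A.E) : Prop :=
  ∀ u ∈ VS, ∀ v ∈ VS, A.reachOn ES u v

/-- An `(s,t)`-splitting of `A`: two connected subgraphs, the first containing
`s_A`, the second containing `t_A`, whose edge sets partition the edges of `A`. -/
def IsSplitting (A : FlowGraph) (V₁ V₂ : Set A.V) (E₁ E₂ : Set A.E) : Prop :=
  A.IsSubgraph V₁ E₁ ∧ A.IsSubgraph V₂ E₂ ∧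
  A.SubConnected V₁ E₁ ∧ A.SubConnected V₂ E₂ ∧
  A.s ∈ V₁ ∧ A.t ∈ V₂ ∧
  E₁ ∪ E₂ = Set.univ ∧ E₁ ∩ E₂ = ∅

/-- The weak order `A ⩽ B`: there is an `(s,t)`-splitting `(H₁, H₂)` of `A` and
graph embeddings `φᵢ : Hᵢ → B` with `φ₁ s_A = s_B`, `φ₂ t_A = t_B`, and whose
edge images are disjoint. -/
def weakLE (A B : FlowGraph) : Prop :=
  ∃ (V₁ V₂ : Set A.V) (E₁ E₂ : Set A.E)
    (φ₁V φ₂V : A.V → B.V) (φ₁E φ₂E : A.E → B.E),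
    A.IsSplitting V₁ V₂ E₁ E₂ ∧
    Set.InjOn φ₁V V₁ ∧ Set.InjOn φ₂V V₂ ∧
    Set.InjOn φ₁E E₁ ∧ Set.InjOn φ₂E E₂ ∧
    (∀ e ∈ E₁, B.src (φ₁E e) = φ₁V (A.src e) ∧ B.tgt (φ₁E e) = φ₁V (A.tgt e)) ∧
    (∀ e ∈ E₂, B.src (φ₂E e) = φ₂V (A.src e) ∧ B.tgt (φ₂E e) = φ₂V (A.tgt e)) ∧
    φ₁V A.s = B.s ∧ φ₂V A.t = B.t ∧
    (φ₁E '' E₁) ∩ (φ₂E '' E₂) = ∅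

/-- `k`-fold sum `C ⊕ C ⊕ ⋯ ⊕ C` (`k` summands); `smul 0 C = F₀`. -/
def smul : ℕ → FlowGraph → FlowGraph
  | 0, _ => F0
  | n + 1, C => C.add (smul n C)

/-- Sum of a head flow graph with a list of further summands:
`sumList A₀ [A₁, …, Aₖ] = A₀ ⊕ A₁ ⊕ ⋯ ⊕ Aₖ`. -/
def sumList (A : FlowGraph) (L : List FlowGraph) : FlowGraph := L.foldl add A

/-- `A` is ⊕-irreducible: it is not (isomorphic to) a sum of two nontrivial flow graphs. -/
def IsIrreducible (A : FlowGraph) : Prop :=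
  ¬ ∃ B C : FlowGraph, B.Connected ∧ C.Connected ∧
      ¬ B.Iso F0 ∧ ¬ C.Iso F0 ∧ A.Iso (B.add C)

/-! In an st-flow graph every vertex `v ≠ w` stays joined to `s` or to `t` after deleting `w`:
follow a path from `v` to `s`; if it first meets `w` along an edge `e = {x, w}`, a simple
`s`–`t` path through `e` passes `x` either before `w` (so its initial segment joins `x` to `s`
avoiding `w`) or after `w` (so its final segment joins `x` to `t` avoiding `w`). Hence if `s`
and `t` were still joined, `G - w` would be connected and `w` no cut vertex. -/

variable (A : FlowGraph)

def edgesAvoiding (w : A.V) : Set A.E := {e | A.src e ≠ w ∧ A.tgt e ≠ w}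

instance (ES : Set A.E) : Std.Symm (A.adjOn ES) :=
  ⟨fun _ _ ⟨e, he, h⟩ => ⟨e, he, h.symm⟩⟩

variable {A}

theorem reachOn_symm {ES : Set A.E} {u v : A.V} (h : A.reachOn ES u v) : A.reachOn ES v u :=
  Relation.ReflTransGen.stdSymm.symm _ _ h

theorem mem_walkVertices_self (u : A.V) (l : List (A.E × Bool)) : u ∈ A.walkVertices u l := by
  cases l <;> simp [walkVertices]

theorem IsWalk.mem_walkVertices_end {u v : A.V} {l : List (A.E × Bool)} (h : A.IsWalk u v l) :
    v ∈ A.walkVertices u l := by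
  induction l generalizing u with
  | nil => simp [walkVertices, h.symm]
  | cons p l ih => exact List.mem_cons_of_mem _ (ih h.2)

theorem isWalk_append_cons {u v : A.V} {l₁ l₂ : List (A.E × Bool)} {p : A.E × Bool} :
    A.IsWalk u v (l₁ ++ p :: l₂) ↔ A.IsWalk u (A.stepSrc p) l₁ ∧ A.IsWalk (A.stepTgt p) v l₂ := by
  induction l₁ generalizing u with
  | nil => simp only [List.nil_append, IsWalk, eq_comm]
  | cons q l ih => simp only [List.cons_append, IsWalk, ih, and_assoc]

theorem walkVertices_append_cons (u : A.V) (l₁ l₂ : List (A.E × Bool)) (p : A.E × Bool) :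
    A.walkVertices u (l₁ ++ p :: l₂) = A.walkVertices u l₁ ++ A.walkVertices (A.stepTgt p) l₂ := by
  induction l₁ generalizing u with
  | nil => rfl
  | cons q l ih => simp only [List.cons_append, walkVertices, ih]

theorem step_mem_edgesAvoiding {w : A.V} {p : A.E × Bool} (hs : A.stepSrc p ≠ w)
    (ht : A.stepTgt p ≠ w) : p.1 ∈ A.edgesAvoiding w := by
  obtain ⟨e, _ | _⟩ := p <;> simp_all [stepSrc, stepTgt, edgesAvoiding]

theorem adjOn_step {ES : Set A.E} {p : A.E × Bool} (hp : p.1 ∈ ES) :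
    A.adjOn ES (A.stepSrc p) (A.stepTgt p) := by
  obtain ⟨e, _ | _⟩ := p <;> exact ⟨e, hp, by simp [stepSrc, stepTgt]⟩

theorem IsWalk.reachOn_edgesAvoiding {w u v : A.V} {l : List (A.E × Bool)} (h : A.IsWalk u v l)
    (hw : w ∉ A.walkVertices u l) : A.reachOn (A.edgesAvoiding w) u v := by
  induction l generalizing u with
  | nil => exact h ▸ Relation.ReflTransGen.refl
  | cons p l ih =>
    obtain ⟨rfl, hl⟩ := h
    simp only [walkVertices, List.mem_cons, not_or] at hw
    have hsrc : A.stepSrc p ≠ w := Ne.symm hw.1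
    have htgt : A.stepTgt p ≠ w := fun h => hw.2 (h ▸ mem_walkVertices_self _ l)
    exact .head (adjOn_step (step_mem_edgesAvoiding hsrc htgt)) (ih hl hw.2)

theorem IsWalk.reachOn_edgesAvoiding_of_mem {u v : A.V} {l : List (A.E × Bool)}
    (h : A.IsWalk u v l) (hnd : (A.walkVertices u l).Nodup) {p : A.E × Bool} (hp : p ∈ l) :
    A.reachOn (A.edgesAvoiding (A.stepTgt p)) u (A.stepSrc p) ∧
      A.reachOn (A.edgesAvoiding (A.stepSrc p)) (A.stepTgt p) v := by
  obtain ⟨l₁, l₂, rfl⟩ := List.append_of_mem hp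
  obtain ⟨h₁, h₂⟩ := isWalk_append_cons.mp h
  rw [walkVertices_append_cons, List.nodup_append'] at hnd
  exact ⟨h₁.reachOn_edgesAvoiding fun hw => hnd.2.2 hw (mem_walkVertices_self _ l₂),
    h₂.reachOn_edgesAvoiding fun hw => hnd.2.2 h₁.mem_walkVertices_end hw⟩

theorem HasST.reachOn_edgesAvoiding {e : A.E} (he : A.HasST e) {x w : A.V}
    (hinc : (A.src e = x ∧ A.tgt e = w) ∨ (A.src e = w ∧ A.tgt e = x)) :
    A.reachOn (A.edgesAvoiding w) x A.s ∨ A.reachOn (A.edgesAvoiding w) x A.t := by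
  obtain ⟨l, hwalk, hnd, dir, hmem⟩ := he
  obtain ⟨hbefore, hafter⟩ := hwalk.reachOn_edgesAvoiding_of_mem hnd hmem
  have hstep : (A.stepSrc (e, dir) = x ∧ A.stepTgt (e, dir) = w) ∨
      (A.stepSrc (e, dir) = w ∧ A.stepTgt (e, dir) = x) := by
    cases dir <;> simp only [stepSrc, stepTgt, Bool.false_eq_true, if_true, if_false] <;> tauto
  rcases hstep with ⟨hx, hw⟩ | ⟨hw, hx⟩
  · exact .inl (reachOn_symm (hx ▸ hw ▸ hbefore))
  · exact .inr (hx ▸ hw ▸ hafter)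

theorem reachOn_edgesAvoiding_s_or_t (hA : A.Connected) (hst : A.IsSTGraph) {w v : A.V}
    (hv : v ≠ w) :
    A.reachOn (A.edgesAvoiding w) v A.s ∨ A.reachOn (A.edgesAvoiding w) v A.t := by
  induction hA v A.s using Relation.ReflTransGen.head_induction_on with
  | refl => exact .inl .refl
  | @head a m hadj _ ih =>
    obtain ⟨e, -, hinc⟩ := hadj
    by_cases hm : m = w
    · exact (hst e).reachOn_edgesAvoiding (hm ▸ hinc)
    · have he : e ∈ A.edgesAvoiding w := by
        rcases hinc with ⟨rfl, rfl⟩ | ⟨rfl, rfl⟩ <;> exact ⟨‹_›, ‹_›⟩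
      have hadj' : A.adjOn (A.edgesAvoiding w) a m := ⟨e, he, hinc⟩
      exact (ih hm).imp (.head hadj') (.head hadj')

end FlowGraph

open FlowGraph in
/-- In an st-flow graph, every cut vertex `w ≠ s, t` is a splitting vertex:
its deletion yields exactly two components, with `s` and `t` in distinct components. -/
theorem flowGraph_cutVertex_is_splittingVertex (A : FlowGraph)
    (hA : A.Connected) (hst : A.IsSTGraph) (w : A.V)
    (hws : w ≠ A.s) (hwt : w ≠ A.t)
    (hcut : ∃ u v : A.V, u ≠ w ∧ v ≠ w ∧
      ¬ A.reachOn {e | A.src e ≠ w ∧ A.tgt e ≠ w} u v) :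
    A.IsSplittingVertex w ∧
      ∀ v : A.V, v ≠ w →
        (A.reachOn {e | A.src e ≠ w ∧ A.tgt e ≠ w} v A.s ∨
         A.reachOn {e | A.src e ≠ w ∧ A.tgt e ≠ w} v A.t) := by
  have hsplit (v : A.V) (hv : v ≠ w) := reachOn_edgesAvoiding_s_or_t hA hst hv
  refine ⟨⟨hws, hwt, fun hs_t => ?_⟩, hsplit⟩
  obtain ⟨u, v, hu, hv, huv⟩ := hcut
  have hreach_s (x : A.V) (hx : x ≠ w) : A.reachOn (A.edgesAvoiding w) x A.s :=
    (hsplit x hx).elim id fun hx_t => hx_t.trans (reachOn_symm hs_t)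
  exact huv ((hreach_s u hu).trans (reachOn_symm (hreach_s v hv)))
end

section
/- (Right-cancellation law for ⊕) Let A, B, C be flow graphs. If B ⊕ A = C ⊕ A, then B = C. -/
/-!
An isomorphism `φ : B ⊕ A ≅ C ⊕ A` must fix the junction `t_B = s_A`. Every vertex of `A` is
cut off from the source by the junction, and `φ` preserves such cuts; if `φ` moved the junction
strictly into `A`, whose complement (`C`) is connected to the source, it would map `A.V`
injectively into `A.V ∖ {s_A}`. Symmetrically, moving it strictly into `C` would give
`|B.V| < |C.V|`, while comparing vertex counts of the two sums gives `|B.V| = |C.V|`.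

With the junction fixed, `φ` is a pair of bijections `B.V ⊕ A' ≃ C.V ⊕ A'` (with
`A' = A.V ∖ {s_A}`) and `B.E ⊕ A.E ≃ C.E ⊕ A.E`. A finite common summand cancels by following
`φ` back and forth through it until it exits into the other side, and this cancellation
commutes with the incidence maps, so it yields `B ≅ C`.
-/

namespace Equiv

variable {α β γ : Type*}

/-- `ExitsTo f x c`: iterating `f` from `x`, and re-entering through the common summand `α`
each time the value lands there, one eventually lands at `Sum.inl c`. -/
inductive ExitsTo (f : β ⊕ α ≃ γ ⊕ α) : β ⊕ α → γ → Prop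
  | here {x : β ⊕ α} {c : γ} : f x = Sum.inl c → ExitsTo f x c
  | next {x : β ⊕ α} {a : α} {c : γ} : f x = Sum.inr a → ExitsTo f (Sum.inr a) c → ExitsTo f x c

namespace ExitsTo

variable {f : β ⊕ α ≃ γ ⊕ α}

theorem unique {x : β ⊕ α} {c c' : γ} (h : ExitsTo f x c) (h' : ExitsTo f x c') : c = c' := by
  induction h with
  | here hx =>
    cases h' with
    | here hx' => exact Sum.inl_injective (hx.symm.trans hx')
    | next hx' => exact absurd (hx.symm.trans hx') Sum.inl_ne_inr
  | next hx _ ih =>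
    cases h' with
    | here hx' => exact absurd (hx'.symm.trans hx) Sum.inl_ne_inr
    | next hx' h' => exact ih (Sum.inr_injective (hx.symm.trans hx') ▸ h')

theorem symm_of_forall {x : β ⊕ α} {c : γ} {b : β} (h : ExitsTo f x c)
    (hx : ∀ y, f.symm y = x → ExitsTo f.symm y b) : ExitsTo f.symm (Sum.inl c) b := by
  induction h with
  | here hfx => exact hx _ (f.symm_apply_eq.mpr hfx.symm)
  | next hfx _ ih =>
    refine ih fun y hy => .next hy (hx _ ?_)
    exact f.symm_apply_eq.mpr hfx.symm

theorem symm {b : β} {c : γ} (h : ExitsTo f (Sum.inl b) c) : ExitsTo f.symm (Sum.inl c) b :=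
  h.symm_of_forall fun _ hy => .here hy

end ExitsTo

/-- The elements of `α` from which the chain never exits are permuted by `f`, so the chain
from `Sum.inl b` cannot enter them. -/
theorem exists_exitsTo [Finite α] (f : β ⊕ α ≃ γ ⊕ α) (b : β) : ∃ c, ExitsTo f (Sum.inl b) c := by
  by_contra! hb
  let S := {a : α // ∀ c, ¬ ExitsTo f (Sum.inr a) c}
  have hstep : ∀ x, (∀ c, ¬ ExitsTo f x c) → ∃ a : S, f x = Sum.inr a.1 := by
    intro x hx
    rcases hfx : f x with c | a
    · exact absurd (.here hfx) (hx c)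
    · exact ⟨⟨a, fun c hc => hx c (.next hfx hc)⟩, rfl⟩
  choose m hm using fun a : S => hstep _ a.2
  have hm_inj : Function.Injective m := fun a₁ a₂ h => Subtype.ext <| Sum.inr_injective <|
    f.injective (show f (Sum.inr a₁.1) = f (Sum.inr a₂.1) by rw [hm, hm, h])
  obtain ⟨a₀, ha₀⟩ := hstep _ hb
  obtain ⟨a, rfl⟩ := Finite.injective_iff_surjective.mp hm_inj a₀
  exact Sum.inr_ne_inl (f.injective ((hm a).trans ha₀.symm))

section Cancel

variable [Finite α]

noncomputable def exitMap (f : β ⊕ α ≃ γ ⊕ α) (b : β) : γ := (exists_exitsTo f b).choose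

theorem exitsTo_exitMap (f : β ⊕ α ≃ γ ⊕ α) (b : β) : ExitsTo f (Sum.inl b) (exitMap f b) :=
  (exists_exitsTo f b).choose_spec

theorem exitMap_eq {f : β ⊕ α ≃ γ ⊕ α} {b : β} {c : γ} (h : ExitsTo f (Sum.inl b) c) :
    exitMap f b = c :=
  (exitsTo_exitMap f b).unique h

theorem exitMap_symm_exitMap (f : β ⊕ α ≃ γ ⊕ α) (b : β) : exitMap f.symm (exitMap f b) = b :=
  exitMap_eq (exitsTo_exitMap f b).symm

noncomputable def sumCancelRight (f : β ⊕ α ≃ γ ⊕ α) : β ≃ γ where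
  toFun := exitMap f
  invFun := exitMap f.symm
  left_inv := exitMap_symm_exitMap f
  right_inv c := by simpa using exitMap_symm_exitMap f.symm c

end Cancel

section Naturality

variable {α' β' γ' : Type*} [Finite α'] {f : β ⊕ α ≃ γ ⊕ α} {f' : β' ⊕ α' ≃ γ' ⊕ α'}
  {σ : β ⊕ α → β' ⊕ α'} {τ : γ ⊕ α → γ' ⊕ α'} {σγ : γ → γ'}

/-- Naturality of the exit chain under maps `σ`, `τ` intertwining `f` and `f'`: on the common
summand they either agree, or they jump to points already matched by `exitMap f'`. -/
theorem ExitsTo.map (hcomm : ∀ x, τ (f x) = f' (σ x)) (hγ : ∀ c, τ (Sum.inl c) = Sum.inl (σγ c))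
    (hα : ∀ a, Sum.LiftRel (fun b' c' => exitMap f' b' = c') Eq (σ (Sum.inr a)) (τ (Sum.inr a)))
    {x : β ⊕ α} {c : γ} (h : ExitsTo f x c) : ExitsTo f' (σ x) (σγ c) := by
  induction h with
  | here hx => exact .here (by rw [← hcomm, hx, hγ])
  | @next x a c hx _ ih =>
    have hfx : f' (σ x) = τ (Sum.inr a) := by rw [← hcomm, hx]
    have hrel := hα a
    generalize σ (Sum.inr a) = u at hrel ih
    generalize τ (Sum.inr a) = v at hrel hfx
    cases hrel with
    | inl hbc => exact .here (by rw [hfx, ← hbc, exitMap_eq ih])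
    | inr hab => exact .next hfx (hab ▸ ih)

theorem exitMap_map [Finite α] {σβ : β → β'} (hcomm : ∀ x, τ (f x) = f' (σ x))
    (hβ : ∀ b, σ (Sum.inl b) = Sum.inl (σβ b)) (hγ : ∀ c, τ (Sum.inl c) = Sum.inl (σγ c))
    (hα : ∀ a, Sum.LiftRel (fun b' c' => exitMap f' b' = c') Eq (σ (Sum.inr a)) (τ (Sum.inr a)))
    (b : β) : exitMap f' (σβ b) = σγ (exitMap f b) :=
  exitMap_eq (hβ b ▸ (exitsTo_exitMap f b).map hcomm hγ hα)

end Naturality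

end Equiv

theorem Nat.card_add_card_le_of_injective {α β X : Type*} [Finite α] [Finite β] [Finite X]
    {f : α → X} {g : β → X} (hf : Function.Injective f) (hg : Function.Injective g)
    (hfg : ∀ a b, f a ≠ g b) : Nat.card α + Nat.card β ≤ Nat.card X :=
  Nat.card_sum (α := α) (β := β) ▸ Nat.card_le_card_of_injective _ (hf.sumElim hg hfg)

namespace FlowGraph

variable {D D' : FlowGraph}

structure Isom (D D' : FlowGraph) where
  vEquiv : D.V ≃ D'.V
  eEquiv : D.E ≃ D'.E
  src_map : ∀ e, D'.src (eEquiv e) = vEquiv (D.src e)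
  tgt_map : ∀ e, D'.tgt (eEquiv e) = vEquiv (D.tgt e)
  s_map : vEquiv D.s = D'.s
  t_map : vEquiv D.t = D'.t

theorem iso_iff_nonempty_isom : D.Iso D' ↔ Nonempty (D.Isom D') :=
  ⟨fun ⟨φV, φE, hsrc, htgt, hs, ht⟩ => ⟨⟨φV, φE, hsrc, htgt, hs, ht⟩⟩,
    fun ⟨φ⟩ => ⟨φ.vEquiv, φ.eEquiv, φ.src_map, φ.tgt_map, φ.s_map, φ.t_map⟩⟩

def Isom.symm (φ : D.Isom D') : D'.Isom D where
  vEquiv := φ.vEquiv.symm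
  eEquiv := φ.eEquiv.symm
  src_map e := φ.vEquiv.eq_symm_apply.mpr (by rw [← φ.src_map, Equiv.apply_symm_apply])
  tgt_map e := φ.vEquiv.eq_symm_apply.mpr (by rw [← φ.tgt_map, Equiv.apply_symm_apply])
  s_map := φ.vEquiv.symm_apply_eq.mpr φ.s_map.symm
  t_map := φ.vEquiv.symm_apply_eq.mpr φ.t_map.symm

def avoiding (D : FlowGraph) (w : D.V) : Set D.E := {e | D.src e ≠ w ∧ D.tgt e ≠ w}

@[simp] theorem mem_avoiding {w : D.V} {e : D.E} :
    e ∈ D.avoiding w ↔ D.src e ≠ w ∧ D.tgt e ≠ w :=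
  Iff.rfl

theorem reachOn_map (f : D.V → D'.V) (g : D.E → D'.E) (hsrc : ∀ e, D'.src (g e) = f (D.src e))
    (htgt : ∀ e, D'.tgt (g e) = f (D.tgt e)) {S : Set D.E} {S' : Set D'.E}
    (hS : ∀ e ∈ S, g e ∈ S') {u v : D.V} (h : D.reachOn S u v) :
    D'.reachOn S' (f u) (f v) := by
  refine Relation.ReflTransGen.lift f ?_ _ _ h
  rintro _ _ ⟨e, he, ⟨rfl, rfl⟩ | ⟨rfl, rfl⟩⟩
  · exact ⟨g e, hS e he, .inl ⟨hsrc e, htgt e⟩⟩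
  · exact ⟨g e, hS e he, .inr ⟨hsrc e, htgt e⟩⟩

theorem Isom.reachOn_avoiding (φ : D.Isom D') {w u v : D.V}
    (h : D.reachOn (D.avoiding w) u v) :
    D'.reachOn (D'.avoiding (φ.vEquiv w)) (φ.vEquiv u) (φ.vEquiv v) :=
  reachOn_map _ _ φ.src_map φ.tgt_map (fun _ he => by
    simpa [φ.src_map, φ.tgt_map, φ.vEquiv.injective.ne_iff] using he) h

theorem reachOn_iff_of_forall_mem {p : D.V → Prop} {S : Set D.E}
    (hp : ∀ e ∈ S, p (D.src e) ↔ p (D.tgt e)) {u v : D.V} (h : D.reachOn S u v) : p u ↔ p v := by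
  induction h with
  | refl => rfl
  | tail _ hadj ih =>
    obtain ⟨e, he, ⟨rfl, rfl⟩ | ⟨rfl, rfl⟩⟩ := hadj
    exacts [ih.trans (hp e he), ih.trans (hp e he).symm]

section Add

variable (P Q : FlowGraph)

def addInl (b : P.V) : (P.add Q).V := Quot.mk _ (Sum.inl b)

def addInr (a : Q.V) : (P.add Q).V := Quot.mk _ (Sum.inr a)

def junction : (P.add Q).V := addInl P Q P.t

@[simp] theorem add_src_inl (e : P.E) : (P.add Q).src (Sum.inl e) = addInl P Q (P.src e) := rfl

@[simp] theorem add_src_inr (e : Q.E) : (P.add Q).src (Sum.inr e) = addInr P Q (Q.src e) := rfl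

@[simp] theorem add_tgt_inl (e : P.E) : (P.add Q).tgt (Sum.inl e) = addInl P Q (P.tgt e) := rfl

@[simp] theorem add_tgt_inr (e : Q.E) : (P.add Q).tgt (Sum.inr e) = addInr P Q (Q.tgt e) := rfl

theorem add_s : (P.add Q).s = addInl P Q P.s := rfl

theorem add_t : (P.add Q).t = addInr P Q Q.t := rfl

theorem addInr_s : addInr P Q Q.s = junction P Q := (Quot.sound ⟨rfl, rfl⟩).symm

theorem addInl_or_addInr (x : (P.add Q).V) : (∃ b, x = addInl P Q b) ∨ ∃ a, x = addInr P Q a := by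
  induction x using Quot.ind with
  | mk x => rcases x with b | a; exacts [.inl ⟨b, rfl⟩, .inr ⟨a, rfl⟩]

open Classical in
/-- Normal form of the vertices of `P ⊕ Q`: the junction is represented by `t_P`. -/
noncomputable def addVEquiv : (P.add Q).V ≃ P.V ⊕ {a : Q.V // a ≠ Q.s} where
  toFun := Quot.lift (Sum.elim Sum.inl fun a => if h : a = Q.s then Sum.inl P.t else Sum.inr ⟨a, h⟩)
    (by rintro _ _ ⟨rfl, rfl⟩; simp)
  invFun := Sum.elim (addInl P Q) (addInr P Q ∘ Subtype.val)
  left_inv := by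
    rintro ⟨b | a⟩
    · rfl
    · by_cases h : a = Q.s
      · subst h
        exact congrArg (Sum.elim _ _) (dif_pos rfl) |>.trans (addInr_s P Q).symm
      · exact congrArg (Sum.elim _ _) (dif_neg h)
  right_inv := by
    rintro (b | ⟨a, h⟩)
    · rfl
    · exact dif_neg h

@[simp] theorem addVEquiv_addInl (b : P.V) : addVEquiv P Q (addInl P Q b) = Sum.inl b := rfl

theorem addVEquiv_addInr_s : addVEquiv P Q (addInr P Q Q.s) = Sum.inl P.t :=
  dif_pos rfl

theorem addVEquiv_addInr_of_ne {a : Q.V} (h : a ≠ Q.s) :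
    addVEquiv P Q (addInr P Q a) = Sum.inr ⟨a, h⟩ :=
  dif_neg h

theorem addInl_injective : Function.Injective (addInl P Q) := fun b b' h => by
  simpa using congrArg (addVEquiv P Q) h

theorem addInl_eq_addInr_iff {b : P.V} {a : Q.V} :
    addInl P Q b = addInr P Q a ↔ b = P.t ∧ a = Q.s := by
  refine ⟨fun h => ?_, fun ⟨hb, ha⟩ => by rw [hb, ha, addInr_s]; rfl⟩
  have h' := congrArg (addVEquiv P Q) h
  by_cases ha : a = Q.s
  · subst ha
    simpa [addVEquiv_addInr_s] using h'
  · simp [addVEquiv_addInr_of_ne P Q ha] at h'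

theorem addInr_injective : Function.Injective (addInr P Q) := by
  refine Function.LeftInverse.injective
    (g := fun x => Sum.elim (fun _ => Q.s) Subtype.val (addVEquiv P Q x)) fun a => ?_
  change Sum.elim (fun _ => Q.s) Subtype.val (addVEquiv P Q (addInr P Q a)) = a
  by_cases ha : a = Q.s
  · subst ha
    rw [addVEquiv_addInr_s]
    rfl
  · rw [addVEquiv_addInr_of_ne P Q ha]
    rfl

theorem addInl_mem_range_addInr {b : P.V} : addInl P Q b ∈ Set.range (addInr P Q) ↔ b = P.t :=
  ⟨fun ⟨_, h⟩ => ((addInl_eq_addInr_iff P Q).mp h.symm).1,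
    fun h => ⟨Q.s, ((addInl_eq_addInr_iff P Q).mpr ⟨h, rfl⟩).symm⟩⟩

theorem addInr_mem_range_addInl {a : Q.V} : addInr P Q a ∈ Set.range (addInl P Q) ↔ a = Q.s :=
  ⟨fun ⟨_, h⟩ => ((addInl_eq_addInr_iff P Q).mp h).2,
    fun h => ⟨P.t, (addInl_eq_addInr_iff P Q).mpr ⟨rfl, h⟩⟩⟩

theorem card_add_V : Nat.card (P.add Q).V + 1 = Nat.card P.V + Nat.card Q.V := by
  classical
  rw [Nat.card_congr (addVEquiv P Q), Nat.card_sum, add_assoc, ← Finite.card_option,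
    Nat.card_congr (Equiv.optionSubtypeNe Q.s)]

theorem liftRel_addVEquiv_addInr {P' : FlowGraph} {R : P.V → P'.V → Prop} (hR : R P.t P'.t)
    (v : Q.V) :
    Sum.LiftRel R Eq (addVEquiv P Q (addInr P Q v)) (addVEquiv P' Q (addInr P' Q v)) := by
  by_cases hv : v = Q.s
  · subst hv
    rw [addVEquiv_addInr_s, addVEquiv_addInr_s]
    exact .inl hR
  · rw [addVEquiv_addInr_of_ne P Q hv, addVEquiv_addInr_of_ne P' Q hv]
    exact .inr rfl

/-- An edge avoiding the junction lies entirely in one of the two summands. -/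
theorem mem_range_iff_of_mem_avoiding {e : (P.add Q).E}
    (he : e ∈ (P.add Q).avoiding (junction P Q)) :
    ((P.add Q).src e ∈ Set.range (addInl P Q) ↔ (P.add Q).tgt e ∈ Set.range (addInl P Q)) ∧
    ((P.add Q).src e ∈ Set.range (addInr P Q) ↔ (P.add Q).tgt e ∈ Set.range (addInr P Q)) := by
  rcases e with e | e
  · have he' : P.src e ≠ P.t ∧ P.tgt e ≠ P.t :=
      ⟨fun h => he.1 (congrArg (addInl P Q) h), fun h => he.2 (congrArg (addInl P Q) h)⟩
    rw [add_src_inl, add_tgt_inl, addInl_mem_range_addInr, addInl_mem_range_addInr]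
    exact ⟨iff_of_true ⟨_, rfl⟩ ⟨_, rfl⟩, iff_of_false he'.1 he'.2⟩
  · have he' : Q.src e ≠ Q.s ∧ Q.tgt e ≠ Q.s :=
      ⟨fun h => he.1 ((congrArg (addInr P Q) h).trans (addInr_s P Q)),
        fun h => he.2 ((congrArg (addInr P Q) h).trans (addInr_s P Q))⟩
    rw [add_src_inr, add_tgt_inr, addInr_mem_range_addInl, addInr_mem_range_addInl]
    exact ⟨iff_of_false he'.1 he'.2, iff_of_true ⟨_, rfl⟩ ⟨_, rfl⟩⟩

theorem eq_junction_of_reachOn_addInr {a : Q.V}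
    (h : (P.add Q).reachOn ((P.add Q).avoiding (junction P Q)) (P.add Q).s (addInr P Q a)) :
    addInr P Q a = junction P Q := by
  obtain ⟨b, hb⟩ := (reachOn_iff_of_forall_mem (fun e he =>
    (mem_range_iff_of_mem_avoiding P Q he).1) h).mp ⟨P.s, rfl⟩
  rw [((addInl_eq_addInr_iff P Q).mp hb).2, addInr_s]

theorem eq_junction_of_reachOn_addInl {b : P.V}
    (h : (P.add Q).reachOn ((P.add Q).avoiding (junction P Q)) (addInl P Q b) (P.add Q).t) :
    addInl P Q b = junction P Q := by
  obtain ⟨a, ha⟩ := (reachOn_iff_of_forall_mem (fun e he =>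
    (mem_range_iff_of_mem_avoiding P Q he).2) h).mpr ⟨Q.t, rfl⟩
  rw [((addInl_eq_addInr_iff P Q).mp ha.symm).1]
  rfl

variable {P Q}

theorem reachOn_addInl (hP : P.Connected) {w : (P.add Q).V} (hw : ∀ b, addInl P Q b ≠ w)
    (u v : P.V) : (P.add Q).reachOn ((P.add Q).avoiding w) (addInl P Q u) (addInl P Q v) :=
  reachOn_map _ Sum.inl (fun _ => rfl) (fun _ => rfl) (fun _ _ => .intro (hw _) (hw _)) (hP u v)

theorem reachOn_addInr (hQ : Q.Connected) {w : (P.add Q).V} (hw : ∀ a, addInr P Q a ≠ w)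
    (u v : Q.V) : (P.add Q).reachOn ((P.add Q).avoiding w) (addInr P Q u) (addInr P Q v) :=
  reachOn_map _ Sum.inr (fun _ => rfl) (fun _ => rfl) (fun _ _ => .intro (hw _) (hw _)) (hQ u v)

end Add

namespace Isom

section

variable {P Q P' Q' : FlowGraph} (φ : (P.add Q).Isom (P'.add Q'))

theorem addInr_ne_addInl (hP' : P'.Connected) {a₀ : Q'.V} (ha₀ : a₀ ≠ Q'.s)
    (hj : φ.vEquiv (junction P Q) = addInr P' Q' a₀) (a : Q.V) (c : P'.V) :
    φ.vEquiv (addInr P Q a) ≠ addInl P' Q' c := by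
  intro hac
  have hw : ∀ b, addInl P' Q' b ≠ addInr P' Q' a₀ := fun b h =>
    ha₀ ((addInl_eq_addInr_iff P' Q').mp h).2
  have h := φ.symm.reachOn_avoiding (reachOn_addInl hP' hw P'.s c)
  rw [← hj, ← hac, ← add_s] at h
  simp only [symm, Equiv.symm_apply_apply, ← φ.s_map] at h
  exact hw c (by rw [← hac, eq_junction_of_reachOn_addInr P Q h, hj])

theorem addInl_ne_addInr (hQ' : Q'.Connected) {c₀ : P'.V} (hc₀ : c₀ ≠ P'.t)
    (hj : φ.vEquiv (junction P Q) = addInl P' Q' c₀) (b : P.V) (a : Q'.V) :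
    φ.vEquiv (addInl P Q b) ≠ addInr P' Q' a := by
  intro hba
  have hw : ∀ a, addInr P' Q' a ≠ addInl P' Q' c₀ := fun a h =>
    hc₀ ((addInl_eq_addInr_iff P' Q').mp h.symm).1
  have h := φ.symm.reachOn_avoiding (reachOn_addInr hQ' hw a Q'.t)
  rw [← hj, ← hba, ← add_t] at h
  simp only [symm, Equiv.symm_apply_apply, ← φ.t_map] at h
  exact hw a (by rw [← hba, eq_junction_of_reachOn_addInl P Q h, hj])

theorem card_lt_of_map_junction_addInr (hP' : P'.Connected) {a₀ : Q'.V} (ha₀ : a₀ ≠ Q'.s)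
    (hj : φ.vEquiv (junction P Q) = addInr P' Q' a₀) : Nat.card Q.V < Nat.card Q'.V := by
  have := Nat.card_add_card_le_of_injective (φ.vEquiv.injective.comp (addInr_injective P Q))
    (addInl_injective P' Q') (φ.addInr_ne_addInl hP' ha₀ hj)
  have := card_add_V P' Q'
  omega

theorem card_lt_of_map_junction_addInl (hQ' : Q'.Connected) {c₀ : P'.V} (hc₀ : c₀ ≠ P'.t)
    (hj : φ.vEquiv (junction P Q) = addInl P' Q' c₀) : Nat.card P.V < Nat.card P'.V := by
  have := Nat.card_add_card_le_of_injective (φ.vEquiv.injective.comp (addInl_injective P Q))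
    (addInr_injective P' Q') (φ.addInl_ne_addInr hQ' hc₀ hj)
  have := card_add_V P' Q'
  omega

end

theorem map_junction {A B C : FlowGraph} (φ : (B.add A).Isom (C.add A)) (hA : A.Connected)
    (hC : C.Connected) : φ.vEquiv (junction B A) = junction C A := by
  have hBC : Nat.card B.V = Nat.card C.V := by
    have := card_add_V B A
    have := card_add_V C A
    have := Nat.card_congr φ.vEquiv
    omega
  rcases addInl_or_addInr C A (φ.vEquiv (junction B A)) with ⟨c, hc⟩ | ⟨a, ha⟩
  · by_cases hct : c = C.t
    · rw [hc, hct]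
      rfl
    · exact absurd hBC (φ.card_lt_of_map_junction_addInl hA hct hc).ne
  · by_cases has : a = A.s
    · rw [ha, has, addInr_s]
    · exact absurd (φ.card_lt_of_map_junction_addInr hC has ha) (lt_irrefl _)

theorem iso_of_map_junction {A B C : FlowGraph} (φ : (B.add A).Isom (C.add A))
    (hj : φ.vEquiv (junction B A) = junction C A) : B.Iso C := by
  let fV := (addVEquiv B A).symm.trans (φ.vEquiv.trans (addVEquiv C A))
  have hfV : ∀ b, fV (Sum.inl b) = addVEquiv C A (φ.vEquiv (addInl B A b)) := fun _ => rfl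
  have ht : Equiv.exitMap fV B.t = C.t :=
    Equiv.exitMap_eq (.here (by rw [hfV, ← junction, hj]; rfl))
  have hinr : ∀ v : A.V, Sum.LiftRel (fun b c => Equiv.exitMap fV b = c) Eq
      (addVEquiv B A (addInr B A v)) (addVEquiv C A (addInr C A v)) :=
    liftRel_addVEquiv_addInr B A ht
  refine ⟨Equiv.sumCancelRight fV, Equiv.sumCancelRight φ.eEquiv, fun e => ?_, fun e => ?_,
    Equiv.exitMap_eq (.here (by rw [hfV, ← add_s, φ.s_map]; rfl)), ht⟩
  · refine (Equiv.exitMap_map (σ := addVEquiv B A ∘ (B.add A).src)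
      (τ := addVEquiv C A ∘ (C.add A).src) (fun x => ?_) (fun _ => rfl) (fun _ => rfl)
      (fun a => hinr (A.src a)) e).symm
    exact congrArg (addVEquiv C A)
      ((φ.src_map x).trans (congrArg φ.vEquiv ((addVEquiv B A).symm_apply_apply _).symm))
  · refine (Equiv.exitMap_map (σ := addVEquiv B A ∘ (B.add A).tgt)
      (τ := addVEquiv C A ∘ (C.add A).tgt) (fun x => ?_) (fun _ => rfl) (fun _ => rfl)
      (fun a => hinr (A.tgt a)) e).symm
    exact congrArg (addVEquiv C A)
      ((φ.tgt_map x).trans (congrArg φ.vEquiv ((addVEquiv B A).symm_apply_apply _).symm))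

end Isom

end FlowGraph

open FlowGraph in
theorem flowGraph_add_right_cancel_general (A B C : FlowGraph)
    (hA : A.Connected) (hC : C.Connected)
    (h : (B.add A).Iso (C.add A)) :
    B.Iso C := by
  obtain ⟨φ⟩ := iso_iff_nonempty_isom.mp h
  exact φ.iso_of_map_junction (φ.map_junction hA hC)

open FlowGraph in
/-- Right-cancellation law for `⊕`. -/
theorem flowGraph_add_right_cancel (A B C : FlowGraph)
    (hA : A.Connected) (hB : B.Connected) (hC : C.Connected)
    (h : (B.add A).Iso (C.add A)) :
    B.Iso C :=
  flowGraph_add_right_cancel_general A B C hA hC h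
end
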